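/- arXiv:1005.2358 — 2 statements merged into one kernel-verified Lean document; each statement's English description precedes it below -/
import Mathlib

section
/- For density matrices ρ, σ with σ positive definite, ‖ρ - σ‖₁² ≤ χ²_{1/2}(ρ,σ) := tr[(ρ-σ)σ^{-1/2}(ρ-σ)σ^{-1/2}]. -/
open Matrix
open scoped ComplexOrder

/-- The trace norm `‖A‖₁ = tr √(A†A)` of a complex matrix. -/
noncomputable def traceNorm {d : ℕ} (A : Matrix (Fin d) (Fin d) ℂ) : ℝ :=
  (((Matrix.posSemidef_conjTranspose_mul_self A).1.eigenvectorUnitary : Matrix (Fin d) (Fin d) ℂ) *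
      Matrix.diagonal (fun i => ((Real.sqrt ((Matrix.posSemidef_conjTranspose_mul_self A).1.eigenvalues i) : ℝ) : ℂ)) *
      star ((Matrix.posSemidef_conjTranspose_mul_self A).1.eigenvectorUnitary :
        Matrix (Fin d) (Fin d) ℂ)).trace.re

/-- Real matrix power of a Hermitian matrix via the spectral decomposition
(defined as `0` on the kernel for negative exponents, i.e. a pseudo-inverse,
and as the junk value `0` for non-Hermitian input). -/
noncomputable def mrpow {d : ℕ} (σ : Matrix (Fin d) (Fin d) ℂ) (α : ℝ) :
    Matrix (Fin d) (Fin d) ℂ :=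
  if hσ : σ.IsHermitian then
    (hσ.eigenvectorUnitary : Matrix (Fin d) (Fin d) ℂ) *
      Matrix.diagonal (fun i => ((hσ.eigenvalues i ^ α : ℝ) : ℂ)) *
      star (hσ.eigenvectorUnitary : Matrix (Fin d) (Fin d) ℂ)
  else 0

/-!
Let `U` be the sign of the Hermitian matrix `Δ = ρ - σ`, so that `U² = 1` and `UΔ = |Δ|`; then
`‖Δ‖₁ = tr (UΔ) = tr ((σ^{1/4} U σ^{1/4}) (σ^{-1/4} Δ σ^{-1/4}))`. The Cauchy–Schwarz inequality for
the Hilbert–Schmidt inner product bounds its square by `tr (U σ^{1/2} U σ^{1/2}) · χ²_{1/2}(ρ, σ)`,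
and a second application of it, using `U² = 1`, gives `tr (U σ^{1/2} U σ^{1/2}) ≤ tr σ = 1`.
-/

namespace Matrix

variable {n 𝕜 : Type*} [Fintype n] [RCLike 𝕜] {A : Matrix n n 𝕜}

lemma re_trace_mul_self_nonneg (hA : A.IsHermitian) : 0 ≤ RCLike.re (A * A).trace := by
  simpa only [hA.eq] using
    (RCLike.nonneg_iff.mp (posSemidef_conjTranspose_mul_self A).trace_nonneg).1

variable [DecidableEq n]

lemma norm_trace_conjTranspose_mul_sq_le (A B : Matrix n n 𝕜) :
    ‖(Aᴴ * B).trace‖ ^ 2 ≤ RCLike.re (Aᴴ * A).trace * RCLike.re (Bᴴ * B).trace := by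
  let _ := toMatrixSeminormedAddCommGroup (1 : Matrix n n 𝕜) PosSemidef.one
  let _ := toMatrixInnerProductSpace (1 : Matrix n n 𝕜) PosSemidef.one
  have h := inner_mul_inner_self_le (𝕜 := 𝕜) A B
  have hinner : ∀ X Y : Matrix n n 𝕜, (inner 𝕜 X Y : 𝕜) = (Xᴴ * Y).trace := fun X Y => by
    change (Y * 1 * Xᴴ).trace = _
    rw [mul_one, trace_mul_comm]
  have hBA : (Bᴴ * A).trace = star (Aᴴ * B).trace := by
    rw [← trace_conjTranspose, conjTranspose_mul, conjTranspose_conjTranspose]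
  rwa [hinner, hinner, hinner, hinner, hBA, norm_star, ← sq] at h

lemma re_trace_mul_mul_mul_le {U S : Matrix n n 𝕜} (hU : U.IsHermitian) (hUU : U * U = 1)
    (hS : S.IsHermitian) : RCLike.re (U * S * U * S).trace ≤ RCLike.re (S * S).trace := by
  have h := norm_trace_conjTranspose_mul_sq_le (U * S * U) S
  have hUSU : (U * S * U).IsHermitian := by
    simpa only [hU.eq] using isHermitian_mul_mul_conjTranspose U hS
  have hUSU_sq : ((U * S * U) * (U * S * U)).trace = (S * S).trace := by
    rw [show (U * S * U) * (U * S * U) = U * (S * S) * U by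
      simp only [mul_assoc, ← mul_assoc U U, hUU, one_mul], trace_mul_cycle, hUU, one_mul]
  rw [hUSU.eq, hS.eq, hUSU_sq, ← sq] at h
  exact (RCLike.re_le_norm _).trans
    ((pow_le_pow_iff_left₀ (norm_nonneg _) (re_trace_mul_self_nonneg hS) two_ne_zero).mp h)

/-- Taking the value `1` at `0` (unlike `SignType.sign`) makes this an involution. -/
noncomputable def unitarySign (A : Matrix n n 𝕜) : Matrix n n 𝕜 :=
  cfc (fun x : ℝ => if 0 ≤ x then 1 else -1) A

lemma unitarySign_isHermitian : (unitarySign A).IsHermitian := cfc_predicate _ _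

lemma unitarySign_mul_self (hA : A.IsHermitian) : unitarySign A * unitarySign A = 1 := by
  rw [unitarySign, ← cfc_mul _ _ _ (A.finite_real_spectrum.continuousOn _)
    (A.finite_real_spectrum.continuousOn _), ← cfc_const_one ℝ A]
  exact cfc_congr fun x _ => by split_ifs <;> norm_num

lemma unitarySign_mul_eq_cfc_abs (hA : A.IsHermitian) :
    unitarySign A * A = cfc (fun x : ℝ => |x|) A := by
  nth_rewrite 2 [← cfc_id' ℝ A]
  rw [unitarySign, ← cfc_mul _ _ _ (A.finite_real_spectrum.continuousOn _)]
  exact cfc_congr fun x _ => by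
    split_ifs with hx
    · rw [one_mul, abs_of_nonneg hx]
    · rw [neg_one_mul, abs_of_neg (not_le.mp hx)]

end Matrix

lemma traceNorm_eq_re_trace_cfc_abs {d : ℕ} {A : Matrix (Fin d) (Fin d) ℂ}
    (hA : A.IsHermitian) : traceNorm A = (cfc (fun x : ℝ => |x|) A).trace.re := by
  have hsqrt : traceNorm A = (cfc Real.sqrt (Aᴴ * A)).trace.re := by
    rw [(posSemidef_conjTranspose_mul_self A).isHermitian.cfc_eq, IsHermitian.cfc,
      Unitary.conjStarAlgAut_apply]
    rfl
  rw [hsqrt, hA.eq, ← sq, ← cfc_pow_id (R := ℝ) A 2, ← cfc_comp _ _ _]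
  congr 2
  exact cfc_congr fun x _ => Real.sqrt_sq_eq_abs x

section mrpow

variable {d : ℕ} {σ : Matrix (Fin d) (Fin d) ℂ}

lemma mrpow_eq_cfc (hσ : σ.IsHermitian) (α : ℝ) : mrpow σ α = cfc (fun x : ℝ => x ^ α) σ := by
  rw [mrpow, dif_pos hσ, hσ.cfc_eq, IsHermitian.cfc, Unitary.conjStarAlgAut_apply]
  rfl

lemma mrpow_isHermitian (hσ : σ.IsHermitian) (α : ℝ) : (mrpow σ α).IsHermitian := by
  rw [mrpow_eq_cfc hσ]
  exact cfc_predicate _ _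

lemma mrpow_one (hσ : σ.IsHermitian) : mrpow σ 1 = σ := by
  simp only [mrpow_eq_cfc hσ, Real.rpow_one, cfc_id' ℝ σ]

lemma mrpow_zero (hσ : σ.IsHermitian) : mrpow σ 0 = 1 := by
  simp only [mrpow_eq_cfc hσ, Real.rpow_zero, cfc_const_one ℝ σ]

lemma mrpow_mul_mrpow (hσ : σ.PosDef) (α β : ℝ) :
    mrpow σ α * mrpow σ β = mrpow σ (α + β) := by
  rw [mrpow_eq_cfc hσ.isHermitian, mrpow_eq_cfc hσ.isHermitian, mrpow_eq_cfc hσ.isHermitian,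
    ← cfc_mul _ _ _ (σ.finite_real_spectrum.continuousOn _) (σ.finite_real_spectrum.continuousOn _)]
  refine cfc_congr fun x hx => (Real.rpow_add ?_ α β).symm
  open scoped MatrixOrder in exact hσ.isStrictlyPositive.spectrum_pos hx

lemma mrpow_conj_isHermitian (hσ : σ.IsHermitian) {X : Matrix (Fin d) (Fin d) ℂ}
    (hX : X.IsHermitian) (α : ℝ) : (mrpow σ α * X * mrpow σ α).IsHermitian := by
  simpa only [(mrpow_isHermitian hσ α).eq] using isHermitian_mul_mul_conjTranspose (mrpow σ α) hX

lemma trace_mrpow_conj_mul_mrpow_conj (hσ : σ.PosDef) (A B : Matrix (Fin d) (Fin d) ℂ)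
    (α β : ℝ) :
    ((mrpow σ α * A * mrpow σ α) * (mrpow σ β * B * mrpow σ β)).trace =
      (A * mrpow σ (α + β) * B * mrpow σ (α + β)).trace := by
  set P := mrpow σ α
  set Q := mrpow σ β
  have hQP : Q * P = mrpow σ (α + β) := by rw [mrpow_mul_mrpow hσ, add_comm]
  rw [show P * A * P * (Q * B * Q) = P * (A * (P * Q) * B * Q) by simp only [mul_assoc],
    trace_mul_comm, show A * (P * Q) * B * Q * P = A * (P * Q) * B * (Q * P) by
      simp only [mul_assoc], mrpow_mul_mrpow hσ, hQP]

lemma re_trace_mul_mrpow_mul_mrpow_nonneg (hσ : σ.PosDef) {Δ : Matrix (Fin d) (Fin d) ℂ}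
    (hΔ : Δ.IsHermitian) (α : ℝ) : 0 ≤ (Δ * mrpow σ α * Δ * mrpow σ α).trace.re := by
  have h := re_trace_mul_self_nonneg (mrpow_conj_isHermitian hσ.isHermitian hΔ (α / 2))
  rwa [trace_mrpow_conj_mul_mrpow_conj hσ, add_halves] at h

lemma norm_trace_mul_sq_le_mrpow_mul_mrpow_neg (hσ : σ.PosDef) {U Δ : Matrix (Fin d) (Fin d) ℂ}
    (hU : U.IsHermitian) (hΔ : Δ.IsHermitian) (α : ℝ) :
    ‖(U * Δ).trace‖ ^ 2 ≤ (U * mrpow σ α * U * mrpow σ α).trace.re *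
      (Δ * mrpow σ (-α) * Δ * mrpow σ (-α)).trace.re := by
  have h := norm_trace_conjTranspose_mul_sq_le (mrpow σ (α / 2) * U * mrpow σ (α / 2))
    (mrpow σ (-(α / 2)) * Δ * mrpow σ (-(α / 2)))
  rwa [(mrpow_conj_isHermitian hσ.isHermitian hU _).eq,
    (mrpow_conj_isHermitian hσ.isHermitian hΔ _).eq, trace_mrpow_conj_mul_mrpow_conj hσ,
    trace_mrpow_conj_mul_mrpow_conj hσ, trace_mrpow_conj_mul_mrpow_conj hσ, add_neg_cancel,
    mrpow_zero hσ.isHermitian, mul_one, mul_one, add_halves, ← neg_add, add_halves] at h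

end mrpow

theorem traceDist_sq_le_chi_sq_half_general (d : ℕ) (ρ σ : Matrix (Fin d) (Fin d) ℂ)
    (hρ : ρ.PosSemidef)
    (hσ : σ.PosDef) (hσtr : σ.trace = 1) :
    traceNorm (ρ - σ) ^ 2 ≤
      (((ρ - σ) * mrpow σ (-(1/2)) * (ρ - σ) * mrpow σ (-(1/2))).trace).re := by
  have hΔ : (ρ - σ).IsHermitian := hρ.isHermitian.sub hσ.isHermitian
  set χ := (((ρ - σ) * mrpow σ (-(1/2)) * (ρ - σ) * mrpow σ (-(1/2))).trace).re
  set U := unitarySign (ρ - σ)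
  have hUσ : (U * mrpow σ (1/2) * U * mrpow σ (1/2)).trace.re ≤ 1 := by
    have h := re_trace_mul_mul_mul_le unitarySign_isHermitian (unitarySign_mul_self hΔ)
      (mrpow_isHermitian hσ.isHermitian (1/2))
    rwa [mrpow_mul_mrpow hσ, add_halves, mrpow_one hσ.isHermitian, hσtr, RCLike.one_re] at h
  calc traceNorm (ρ - σ) ^ 2 = (U * (ρ - σ)).trace.re ^ 2 := by
        rw [traceNorm_eq_re_trace_cfc_abs hΔ, unitarySign_mul_eq_cfc_abs hΔ]
    _ ≤ ‖(U * (ρ - σ)).trace‖ ^ 2 :=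
        sq_le_sq.mpr ((Complex.abs_re_le_norm _).trans (le_abs_self _))
    _ ≤ (U * mrpow σ (1/2) * U * mrpow σ (1/2)).trace.re * χ :=
        norm_trace_mul_sq_le_mrpow_mul_mrpow_neg hσ unitarySign_isHermitian hΔ (1/2)
    _ ≤ χ := mul_le_of_le_one_left
        (re_trace_mul_mrpow_mul_mrpow_nonneg hσ hΔ (-(1/2))) hUσ

/-- For density matrices `ρ, σ` with `σ` positive definite,
`‖ρ - σ‖₁² ≤ χ²_{1/2}(ρ,σ) = tr[(ρ-σ)σ^{-1/2}(ρ-σ)σ^{-1/2}]`. -/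
theorem traceDist_sq_le_chi_sq_half (d : ℕ) (ρ σ : Matrix (Fin d) (Fin d) ℂ)
    (hρ : ρ.PosSemidef) (hρtr : ρ.trace = 1)
    (hσ : σ.PosDef) (hσtr : σ.trace = 1) :
    traceNorm (ρ - σ) ^ 2 ≤
      (((ρ - σ) * mrpow σ (-(1/2)) * (ρ - σ) * mrpow σ (-(1/2))).trace).re :=
  traceDist_sq_le_chi_sq_half_general d ρ σ hρ hσ hσtr
end

section
/- For γ ∈ (0,1] and density matrices ρ, σ with σ positive definite and supp(ρ) ⊆ supp(σ), the relative entropy satisfies tr[ρ(log ρ - log σ)] ≤ (1/γ)(tr[ρ^{1+γ} σ^{-γ}] - 1). -/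
/-!
Diagonalize `ρ = ∑ pᵢ |uᵢ⟩⟨uᵢ|` and `σ = ∑ qⱼ |vⱼ⟩⟨vⱼ|`. Every trace `tr[f(ρ) g(σ)]` equals
`∑ᵢⱼ f(pᵢ) g(qⱼ) cᵢⱼ` with `cᵢⱼ = |⟨uᵢ, vⱼ⟩|²`, and the rows of `c` sum to `1` because `c` comes
from a unitary. With these weights both sides become classical sums, and the claim follows termwise
from `log x ≤ (x^γ - 1) / γ` at `x = pᵢ / qⱼ`, multiplied by `pᵢ cᵢⱼ`.
-/

open Matrix
open scoped ComplexOrder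

/-- Matrix logarithm of a Hermitian matrix via the spectral decomposition (with the
convention `Real.log 0 = 0` on the kernel, and junk value `0` for non-Hermitian input). -/
noncomputable def mlog {d : ℕ} (σ : Matrix (Fin d) (Fin d) ℂ) :
    Matrix (Fin d) (Fin d) ℂ :=
  if hσ : σ.IsHermitian then
    (hσ.eigenvectorUnitary : Matrix (Fin d) (Fin d) ℂ) *
      Matrix.diagonal (fun i => ((Real.log (hσ.eigenvalues i) : ℝ) : ℂ)) *
      star (hσ.eigenvectorUnitary : Matrix (Fin d) (Fin d) ℂ)
  else 0

/-- Quantum relative entropy `S(ρ‖σ) = tr[ρ log ρ] - tr[ρ log σ]`, with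
`tr[ρ log ρ] = ∑ k, λ_k log λ_k` over the eigenvalues of `ρ` (so `0 log 0 = 0`). -/
noncomputable def relEntropy {d : ℕ} (ρ σ : Matrix (Fin d) (Fin d) ℂ)
    (hρ : ρ.IsHermitian) : ℝ :=
  (∑ k, hρ.eigenvalues k * Real.log (hρ.eigenvalues k)) - ((ρ * mlog σ).trace).re

namespace Real

theorem mul_log_sub_mul_log_le {p q γ : ℝ} (hp : 0 ≤ p) (hq : 0 < q) (hγ : 0 < γ) :
    p * log p - p * log q ≤ (1 / γ) * (p ^ (1 + γ) * q ^ (-γ) - p) := by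
  rcases hp.eq_or_lt with rfl | hp
  · simp [zero_rpow (by positivity : (1 : ℝ) + γ ≠ 0)]
  have hpq : 0 < p / q := div_pos hp hq
  have hlog : log (p / q) ≤ (1 / γ) * ((p / q) ^ γ - 1) := by
    have := log_le_sub_one_of_pos (rpow_pos_of_pos hpq γ)
    rw [log_rpow hpq] at this
    rw [one_div, inv_mul_eq_div, le_div_iff₀ hγ]
    linarith
  have hpow : p * (p / q) ^ γ = p ^ (1 + γ) * q ^ (-γ) := by
    rw [div_rpow hp.le hq.le, rpow_neg hq.le, rpow_add hp, rpow_one, div_eq_mul_inv, mul_assoc]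
  calc p * log p - p * log q = p * log (p / q) := by rw [log_div hp.ne' hq.ne']; ring
    _ ≤ p * ((1 / γ) * ((p / q) ^ γ - 1)) := mul_le_mul_of_nonneg_left hlog hp.le
    _ = (1 / γ) * (p ^ (1 + γ) * q ^ (-γ) - p) := by rw [← hpow]; ring

end Real

open Real in
theorem sum_mul_log_sub_le_rpow_of_rowStochastic {ι κ : Type*} [Fintype ι] [Fintype κ]
    {p : ι → ℝ} {q : κ → ℝ} {c : ι → κ → ℝ} {γ : ℝ} (hp : ∀ i, 0 ≤ p i) (hp1 : ∑ i, p i = 1)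
    (hq : ∀ j, 0 < q j) (hc : ∀ i j, 0 ≤ c i j) (hc1 : ∀ i, ∑ j, c i j = 1) (hγ : 0 < γ) :
    ∑ i, p i * log (p i) - ∑ i, ∑ j, p i * log (q j) * c i j ≤
      (1 / γ) * (∑ i, ∑ j, p i ^ (1 + γ) * q j ^ (-γ) * c i j - 1) := by
  have hlhs : ∑ i, p i * log (p i) - ∑ i, ∑ j, p i * log (q j) * c i j =
      ∑ i, ∑ j, (p i * log (p i) - p i * log (q j)) * c i j := by
    simp only [sub_mul, Finset.sum_sub_distrib, ← Finset.mul_sum, hc1, mul_one]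
  have hrhs : (1 / γ) * (∑ i, ∑ j, p i ^ (1 + γ) * q j ^ (-γ) * c i j - 1) =
      ∑ i, ∑ j, (1 / γ) * (p i ^ (1 + γ) * q j ^ (-γ) - p i) * c i j := by
    simp only [mul_sub, sub_mul, Finset.sum_sub_distrib, ← Finset.mul_sum, hc1, mul_one, hp1,
      mul_assoc]
  rw [hlhs, hrhs]
  gcongr with i _ j _
  · exact hc i j
  · exact mul_log_sub_mul_log_le (hp i) (hq j) hγ

section Spectral

variable {n : Type*} [Fintype n] [DecidableEq n]

theorem Matrix.sum_normSq_apply_eq_one_of_mem_unitary {W : Matrix n n ℂ}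
    (hW : W ∈ unitary (Matrix n n ℂ)) (i : n) : ∑ j, Complex.normSq (W i j) = 1 := by
  have h : (W * star W) i i = (1 : Matrix n n ℂ) i i := by rw [Unitary.mul_star_self_of_mem hW]
  simp only [mul_apply, star_apply, one_apply_eq, RCLike.star_def, Complex.mul_conj] at h
  exact_mod_cast h

theorem Matrix.re_trace_conj_diagonal_mul_conj_diagonal (U V : Matrix n n ℂ) (f g : n → ℝ) :
    ((U * diagonal (fun i => (f i : ℂ)) * star U) *
      (V * diagonal (fun j => (g j : ℂ)) * star V)).trace.re =
      ∑ i, ∑ j, f i * g j * Complex.normSq ((star U * V) i j) := by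
  set W := star U * V
  have hcycle : ((U * diagonal (fun i => (f i : ℂ)) * star U) *
      (V * diagonal (fun j => (g j : ℂ)) * star V)).trace =
      (diagonal (fun i => (f i : ℂ)) * W * diagonal (fun j => (g j : ℂ)) * star W).trace := by
    rw [show star W = star V * U by simp [W, star_mul]]
    simp only [W, Matrix.mul_assoc]
    rw [trace_mul_comm U]
    simp only [Matrix.mul_assoc]
  rw [hcycle, trace, Complex.re_sum]
  refine Finset.sum_congr rfl fun i _ => ?_
  rw [diag_apply, mul_apply, Complex.re_sum]
  refine Finset.sum_congr rfl fun j _ => ?_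
  rw [mul_diagonal, diagonal_mul, star_apply, RCLike.star_def,
    show (f i : ℂ) * W i j * g j * (starRingEnd ℂ) (W i j) =
      f i * g j * (W i j * (starRingEnd ℂ) (W i j)) by ring,
    Complex.mul_conj]
  norm_cast

noncomputable def eigenOverlap {A B : Matrix n n ℂ} (hA : A.IsHermitian) (hB : B.IsHermitian)
    (i j : n) : ℝ :=
  Complex.normSq ((star (hA.eigenvectorUnitary : Matrix n n ℂ) * hB.eigenvectorUnitary) i j)

theorem sum_eigenOverlap_eq_one {A B : Matrix n n ℂ} (hA : A.IsHermitian) (hB : B.IsHermitian)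
    (i : n) : ∑ j, eigenOverlap hA hB i j = 1 :=
  sum_normSq_apply_eq_one_of_mem_unitary
    (mul_mem (Unitary.star_mem hA.eigenvectorUnitary.2) hB.eigenvectorUnitary.2) i

end Spectral

section MatrixFunctions

variable {d : ℕ} {ρ σ : Matrix (Fin d) (Fin d) ℂ}

theorem mrpow_of_isHermitian (hσ : σ.IsHermitian) (α : ℝ) :
    mrpow σ α = (hσ.eigenvectorUnitary : Matrix (Fin d) (Fin d) ℂ) *
      diagonal (fun i => ((hσ.eigenvalues i ^ α : ℝ) : ℂ)) *
      star (hσ.eigenvectorUnitary : Matrix (Fin d) (Fin d) ℂ) := by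
  rw [mrpow, dif_pos hσ]

theorem mlog_of_isHermitian (hσ : σ.IsHermitian) :
    mlog σ = (hσ.eigenvectorUnitary : Matrix (Fin d) (Fin d) ℂ) *
      diagonal (fun i => ((Real.log (hσ.eigenvalues i) : ℝ) : ℂ)) *
      star (hσ.eigenvectorUnitary : Matrix (Fin d) (Fin d) ℂ) := by
  rw [mlog, dif_pos hσ]

theorem re_trace_mul_mlog (hρ : ρ.IsHermitian) (hσ : σ.IsHermitian) :
    (ρ * mlog σ).trace.re = ∑ i, ∑ j,
      hρ.eigenvalues i * Real.log (hσ.eigenvalues j) * eigenOverlap hρ hσ i j := by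
  conv_lhs => rw [hρ.spectral_theorem, mlog_of_isHermitian hσ]
  exact re_trace_conj_diagonal_mul_conj_diagonal _ _ _ _

theorem re_trace_mrpow_mul_mrpow (hρ : ρ.IsHermitian) (hσ : σ.IsHermitian) (α β : ℝ) :
    (mrpow ρ α * mrpow σ β).trace.re = ∑ i, ∑ j,
      hρ.eigenvalues i ^ α * hσ.eigenvalues j ^ β * eigenOverlap hρ hσ i j := by
  rw [mrpow_of_isHermitian hρ, mrpow_of_isHermitian hσ]
  exact re_trace_conj_diagonal_mul_conj_diagonal _ _ _ _

end MatrixFunctions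

theorem relEntropy_le_power_bound_general (d : ℕ) (ρ σ : Matrix (Fin d) (Fin d) ℂ)
    (γ : ℝ) (hγ : γ ∈ Set.Ioc (0 : ℝ) 1)
    (hρ : ρ.PosSemidef) (hρtr : ρ.trace = 1)
    (hσ : σ.PosDef) :
    relEntropy ρ σ hρ.1 ≤
      (1 / γ) * (((mrpow ρ (1 + γ) * mrpow σ (-γ)).trace).re - 1) := by
  have hp1 : ∑ i, hρ.1.eigenvalues i = 1 := by
    simpa [hρtr] using congrArg Complex.re hρ.1.trace_eq_sum_eigenvalues.symm
  rw [relEntropy, re_trace_mul_mlog hρ.1 hσ.1, re_trace_mrpow_mul_mrpow hρ.1 hσ.1]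
  exact sum_mul_log_sub_le_rpow_of_rowStochastic hρ.eigenvalues_nonneg hp1 hσ.eigenvalues_pos
    (fun _ _ => Complex.normSq_nonneg _) (sum_eigenOverlap_eq_one hρ.1 hσ.1) hγ.1

/-- For `γ ∈ (0,1]` and density matrices `ρ, σ` with `σ` positive definite
(so that `supp ρ ⊆ supp σ` automatically),
`tr[ρ(log ρ - log σ)] ≤ (1/γ)(tr[ρ^{1+γ} σ^{-γ}] - 1)`. -/
theorem relEntropy_le_power_bound (d : ℕ) (ρ σ : Matrix (Fin d) (Fin d) ℂ)
    (γ : ℝ) (hγ : γ ∈ Set.Ioc (0 : ℝ) 1)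
    (hρ : ρ.PosSemidef) (hρtr : ρ.trace = 1)
    (hσ : σ.PosDef) (hσtr : σ.trace = 1) :
    relEntropy ρ σ hρ.1 ≤
      (1 / γ) * (((mrpow ρ (1 + γ) * mrpow σ (-γ)).trace).re - 1) :=
  relEntropy_le_power_bound_general d ρ σ γ hγ hρ hρtr hσ
end
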